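/- arXiv:1604.02549 — 8 statements merged into one kernel-verified Lean document; each statement's English description precedes it below -/
import Mathlib

section
/- Let σ be a k-cycle on a finite set, where k ≥ 2 and k ≠ 3. Then there exist a balanced permutation ρ and a nearly balanced permutation τ such that σ = τρ and supp(τ) ∪ supp(ρ) ⊆ supp(σ). -/
open Equiv

/-- A permutation is balanced if for every k ≥ 2 the number of k-cycles in its
cycle decomposition is even. -/
def PermBalanced {X : Type*} [Fintype X] [DecidableEq X] (σ : Equiv.Perm X) : Prop :=
  ∀ k : ℕ, 2 ≤ k → Even (σ.cycleType.count k)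

/-- A permutation is nearly balanced if for every k ≥ 3 the number of k-cycles in
its cycle decomposition is even. -/
def PermNearlyBalanced {X : Type*} [Fintype X] [DecidableEq X] (σ : Equiv.Perm X) : Prop :=
  ∀ k : ℕ, 3 ≤ k → Even (σ.cycleType.count k)

/-- The disjoint sum g + h ∈ S(2 × X): acts as g on {0(=false)} × X and as h on {1(=true)} × X. -/
def dsum {X : Type*} (g h : Equiv.Perm X) : Equiv.Perm (Bool × X) where
  toFun p := (p.1, if p.1 then h p.2 else g p.2)
  invFun p := (p.1, if p.1 then h.symm p.2 else g.symm p.2)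
  left_inv := by rintro ⟨b, x⟩; cases b <;> simp
  right_inv := by rintro ⟨b, x⟩; cases b <;> simp

/-- The factor f × id₂ acting on 2 × A × 2. -/
def leftFactor {A : Type*} (f : Equiv.Perm (Bool × A)) : Equiv.Perm (Bool × A × Bool) :=
  (Equiv.prodAssoc Bool A Bool).permCongr (Equiv.prodCongr f (Equiv.refl Bool))

/-- The factor id₂ × g acting on 2 × A × 2. -/
def rightFactor {A : Type*} (g : Equiv.Perm (A × Bool)) : Equiv.Perm (Bool × A × Bool) :=
  Equiv.prodCongr (Equiv.refl Bool) g

/-- A permutation of 2 × A × 2 is a factor if it is of the form f × id₂ or id₂ × g. -/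
def IsFactor {A : Type*} (π : Equiv.Perm (Bool × A × Bool)) : Prop :=
  (∃ f : Equiv.Perm (Bool × A), π = leftFactor f) ∨
  (∃ g : Equiv.Perm (A × Bool), π = rightFactor g)

/-- σ has alternation depth d if it is a product of d factors. -/
def AltDepth {A : Type*} (σ : Equiv.Perm (Bool × A × Bool)) (d : ℕ) : Prop :=
  ∃ L : List (Equiv.Perm (Bool × A × Bool)),
    L.length = d ∧ (∀ π ∈ L, IsFactor π) ∧ L.prod = σ

/-!
A `2m`-cycle `(x₁ … x₂ₘ)` is `(x₁ xₘ₊₁)` times the two disjoint `m`-cycles `(x₁ … xₘ)` and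
`(xₘ₊₁ … x₂ₘ)`, and two disjoint cycles of the same length form a balanced permutation.
A `(2m+1)`-cycle `σ` is `(x σx)` times a `2m`-cycle `σ'` on the remaining points; splitting `σ'`
as above at `y = σ'(σx)` produces a transposition `(y σ'^m y)` disjoint from `(x σx)` as soon as
`m ≥ 2`. In both cases `σ = τρ` with `ρ` balanced and `τ` an involution, hence nearly balanced.
-/

open Equiv Equiv.Perm Finset

namespace List

variable {α : Type*} [DecidableEq α]

theorem formPerm_cons_append_cons (a : α) (l₁ : List α) (b : α) (l₂ : List α)
    (h : (a :: l₁ ++ b :: l₂).Nodup) :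
    formPerm (a :: l₁ ++ b :: l₂) = Equiv.swap a b * (formPerm (a :: l₁) * formPerm (b :: l₂)) := by
  induction l₁ generalizing a with
  | nil => simp
  | cons c l₁ ih =>
    have hc : (c :: l₁ ++ b :: l₂).Nodup := (nodup_cons.mp h).2
    have ha : a ∉ c :: l₁ ++ b :: l₂ := (nodup_cons.mp h).1
    have hbc : b ≠ c := fun hbc => (nodup_cons.mp hc).1 (by simp [hbc])
    have hba : b ≠ a := fun hba => ha (by simp [hba])
    -- conjugating `swap c b` by `swap a c` turns it into `swap a b`
    have braid : Equiv.swap a c * Equiv.swap c b = Equiv.swap a b * Equiv.swap a c := by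
      rw [mul_swap_eq_swap_mul, swap_apply_right, swap_apply_of_ne_of_ne hba hbc]
    calc formPerm (a :: c :: l₁ ++ b :: l₂)
        = Equiv.swap a c * formPerm (c :: l₁ ++ b :: l₂) := formPerm_cons_cons _ _ _
      _ = Equiv.swap a c * (Equiv.swap c b * (formPerm (c :: l₁) * formPerm (b :: l₂))) := by
        rw [ih c hc]
      _ = Equiv.swap a b * (formPerm (a :: c :: l₁) * formPerm (b :: l₂)) := by
        rw [formPerm_cons_cons, ← mul_assoc, braid]
        simp only [mul_assoc]

theorem formPerm_eq_swap_mul_formPerm_take_mul_formPerm_drop {l : List α} (hl : l.Nodup)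
    {n : ℕ} (hn0 : 0 < n) (hn : n < l.length) :
    formPerm l = Equiv.swap l[0] l[n] * (formPerm (l.take n) * formPerm (l.drop n)) := by
  obtain ⟨n, rfl⟩ := Nat.exists_eq_add_one_of_ne_zero hn0.ne'
  cases l with
  | nil => simp at hn
  | cons a l =>
    have hn' : n < l.length := by simpa using hn
    have hsplit : a :: l = a :: l.take n ++ l[n] :: l.drop (n + 1) := by
      rw [← drop_eq_getElem_cons hn', cons_append, take_append_drop]
    rw [take_succ_cons, drop_succ_cons, drop_eq_getElem_cons hn', getElem_cons_zero,
      getElem_cons_succ, ← formPerm_cons_append_cons _ _ _ _ (hsplit ▸ hl), ← hsplit]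

theorem Disjoint.formPerm_disjoint {s t : List α} (h : s.Disjoint t) :
    Perm.Disjoint (formPerm s) (formPerm t) := fun x =>
  if hx : x ∈ s then .inr (formPerm_apply_of_notMem fun ht => h hx ht)
  else .inl (formPerm_apply_of_notMem hx)

theorem cycleType_formPerm_eq_of_length_eq [Fintype α] {s t : List α} (hs : s.Nodup)
    (ht : t.Nodup) (hst : s.length = t.length) :
    (formPerm s).cycleType = (formPerm t).cycleType := by
  by_cases h2 : 2 ≤ s.length
  · have card_support {l : List α} (hl : l.Nodup) (h2 : 2 ≤ l.length) :
        #(formPerm l).support = l.length := by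
      rw [support_formPerm_of_nodup l hl (by rintro x rfl; simp at h2), toFinset_card_of_nodup hl]
    rw [(isCycle_formPerm hs h2).cycleType, (isCycle_formPerm ht (hst ▸ h2)).cycleType,
      card_support hs h2, card_support ht (hst ▸ h2), hst]
  · rw [(formPerm_eq_one_iff _ hs).mpr (by omega), (formPerm_eq_one_iff _ ht).mpr (by omega)]

end List

namespace Equiv.Perm

variable {α : Type*} [DecidableEq α]

theorem sq_swap_mul_swap_eq_one {a b c d : α} (hac : a ≠ c) (had : a ≠ d) (hbc : b ≠ c)
    (hbd : b ≠ d) : (swap a b * swap c d) ^ 2 = 1 := by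
  have hdisj : (swap a b).Disjoint (swap c d) := fun w => by
    by_cases hw : w = a ∨ w = b
    · right
      rcases hw with rfl | rfl <;> exact swap_apply_of_ne_of_ne ‹_› ‹_›
    · left
      rw [not_or] at hw
      exact swap_apply_of_ne_of_ne hw.1 hw.2
  rw [hdisj.commute.mul_pow, sq, sq, swap_mul_self, swap_mul_self, one_mul]

variable [Fintype α]

theorem support_swap_subset (x y : α) : (swap x y).support ⊆ {x, y} := by
  intro z hz
  by_contra h
  simp only [mem_insert, mem_singleton, not_or] at h
  exact mem_support.mp hz (swap_apply_of_ne_of_ne h.1 h.2)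

theorem support_union_subset_of_eq_mul {σ τ ρ : Perm α} (h : σ = τ * ρ)
    (hτ : τ.support ⊆ σ.support) : τ.support ∪ ρ.support ⊆ σ.support := by
  have hρ : ρ = τ⁻¹ * σ := eq_inv_mul_of_mul_eq h.symm
  refine union_subset hτ ?_
  rw [hρ]
  refine (support_mul_le _ _).trans (union_subset ?_ le_rfl)
  rw [support_inv]
  exact hτ

theorem permBalanced_mul_of_disjoint_of_cycleType_eq {σ τ : Perm α} (h : σ.Disjoint τ)
    (hστ : σ.cycleType = τ.cycleType) : PermBalanced (σ * τ) := by
  intro j _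
  rw [h.cycleType_mul, hστ, Multiset.count_add]
  exact ⟨_, rfl⟩

theorem permNearlyBalanced_of_sq_eq_one {σ : Perm α} (hσ : σ ^ 2 = 1) :
    PermNearlyBalanced σ := by
  intro j hj
  suffices j ∉ σ.cycleType by simp [Multiset.count_eq_zero.mpr this]
  intro hmem
  have hdvd : j ∣ 2 := (dvd_of_mem_cycleType hmem).trans (orderOf_dvd_of_pow_eq_one hσ)
  have := Nat.le_of_dvd two_pos hdvd
  omega

theorem IsCycle.exists_eq_swap_mul_permBalanced {σ : Perm α} (hσ : σ.IsCycle) {m : ℕ}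
    (hm : #σ.support = 2 * m) {x : α} (hx : x ∈ σ.support) :
    ∃ ρ, PermBalanced ρ ∧ σ = swap x ((σ ^ m) x) * ρ := by
  set l := σ.toList x
  have hcyc : σ.cycleOf x = σ := hσ.cycleOf_eq (mem_support.mp hx)
  have hlen : l.length = 2 * m := by rw [length_toList, hcyc, hm]
  have hpos : 0 < l.length := length_toList_pos_of_mem_support σ x hx
  have hm0 : 0 < m := by omega
  have hml : m < l.length := by omega
  refine ⟨(l.take m).formPerm * (l.drop m).formPerm,
    permBalanced_mul_of_disjoint_of_cycleType_eq
      (List.disjoint_take_drop (nodup_toList σ x) le_rfl).formPerm_disjoint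
      (List.cycleType_formPerm_eq_of_length_eq ((nodup_toList σ x).sublist (List.take_sublist _ _))
        ((nodup_toList σ x).sublist (List.drop_sublist _ _)) (by simp only [List.length_take, List.length_drop]; omega)), ?_⟩
  calc σ = l.formPerm := by rw [formPerm_toList, hcyc]
    _ = _ := List.formPerm_eq_swap_mul_formPerm_take_mul_formPerm_drop (nodup_toList σ x) hm0 hml
    _ = _ := by rw [toList_getElem_zero σ x hx, getElem_toList]

theorem IsCycle.exists_sq_eq_one_mul_permBalanced_of_card_eq_two_mul_add_one {σ : Perm α}
    (hσ : σ.IsCycle) {m : ℕ} (hm : #σ.support = 2 * m + 1) (h2 : 2 ≤ m) {x : α}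
    (hx : x ∈ σ.support) :
    ∃ τ ρ : Perm α, τ ^ 2 = 1 ∧ τ.support ⊆ σ.support ∧ PermBalanced ρ ∧ σ = τ * ρ := by
  have hσx : σ x ≠ x := mem_support.mp hx
  have hσσx : σ (σ x) ≠ x := fun h => by
    have := card_support_swap hσx.symm
    rw [← hσ.eq_swap_of_apply_apply_eq_self hσx h] at this
    omega
  set σ' := swap x (σ x) * σ
  have hσ' : σ'.IsCycle := hσ.swap_mul hσx hσσx
  have hsupp : σ'.support = σ.support \ {x} := support_swap_mul_eq σ x hσσx
  have hcard : #σ'.support = 2 * m := by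
    rw [hsupp, sdiff_singleton_eq_erase, card_erase_of_mem hx, hm]; rfl
  have hx' : x ∉ σ'.support := by simp [hsupp]
  have hσx' : σ x ∈ σ'.support := by simp [hsupp, hσx, apply_mem_support.mpr hx]
  set y := σ' (σ x)
  have hy : y ∈ σ'.support := apply_mem_support.mpr hσx'
  obtain ⟨ρ, hρ, hσ'ρ⟩ := hσ'.exists_eq_swap_mul_permBalanced hcard hy
  set z := (σ' ^ m) y
  have hz : z ∈ σ'.support := pow_apply_mem_support.mpr hy
  -- `z = σ'^(m+1) (σ x)`, and `2m ∤ m + 1` once `m ≥ 2`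
  have hzσx : σ x ≠ z := fun h => by
    have hpow : σ' ^ (m + 1) = 1 := by
      rw [hσ'.pow_eq_one_iff' (mem_support.mp hσx'), pow_succ, mul_apply]
      exact h.symm
    have := Nat.le_of_dvd (by omega) (hσ'.orderOf ▸ orderOf_dvd_of_pow_eq_one hpow)
    omega
  have hsub : σ'.support ⊆ σ.support := hsupp ▸ sdiff_subset
  refine ⟨swap x (σ x) * swap y z, ρ,
    sq_swap_mul_swap_eq_one (ne_of_mem_of_not_mem hy hx').symm (ne_of_mem_of_not_mem hz hx').symm
      (mem_support.mp hσx').symm hzσx, ?_, hρ, ?_⟩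
  · refine (support_mul_le _ _).trans (union_subset ?_ ?_) <;>
      refine (support_swap_subset _ _).trans (insert_subset_iff.mpr ⟨?_, ?_⟩)
    all_goals simp [hx, apply_mem_support.mpr hx, hsub hy, hsub hz]
  · rw [mul_assoc, ← hσ'ρ, swap_mul_self_mul]

theorem IsCycle.exists_sq_eq_one_mul_permBalanced {σ : Perm α} (hσ : σ.IsCycle)
    (h3 : #σ.support ≠ 3) :
    ∃ τ ρ : Perm α, τ ^ 2 = 1 ∧ τ.support ⊆ σ.support ∧ PermBalanced ρ ∧ σ = τ * ρ := by
  obtain ⟨x, hx⟩ := hσ.nonempty_support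
  obtain ⟨m, hm | hm⟩ := Nat.even_or_odd' #σ.support
  · obtain ⟨ρ, hρ, hσρ⟩ := hσ.exists_eq_swap_mul_permBalanced hm hx
    refine ⟨_, ρ, by rw [sq, swap_mul_self], (support_swap_subset _ _).trans ?_, hρ, hσρ⟩
    simp [insert_subset_iff, hx, pow_apply_mem_support.mpr hx]
  · have := hσ.two_le_card_support
    exact hσ.exists_sq_eq_one_mul_permBalanced_of_card_eq_two_mul_add_one hm (by omega) hx

end Equiv.Perm

theorem stmt_1_general {X : Type*} [Fintype X] [DecidableEq X] (σ : Equiv.Perm X) (k : ℕ)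
    (hk3 : k ≠ 3) (hcyc : σ.IsCycle) (hcard : σ.support.card = k) :
    ∃ ρ τ : Equiv.Perm X, PermBalanced ρ ∧ PermNearlyBalanced τ ∧ σ = τ * ρ ∧
      τ.support ∪ ρ.support ⊆ σ.support := by
  obtain ⟨τ, ρ, hτ, hτσ, hρ, hσ⟩ := hcyc.exists_sq_eq_one_mul_permBalanced (hcard ▸ hk3)
  exact ⟨ρ, τ, hρ, permNearlyBalanced_of_sq_eq_one hτ, hσ, support_union_subset_of_eq_mul hσ hτσ⟩

theorem stmt_1 {X : Type*} [Fintype X] [DecidableEq X] (σ : Equiv.Perm X) (k : ℕ)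
    (hk2 : 2 ≤ k) (hk3 : k ≠ 3) (hcyc : σ.IsCycle) (hcard : σ.support.card = k) :
    ∃ ρ τ : Equiv.Perm X, PermBalanced ρ ∧ PermNearlyBalanced τ ∧ σ = τ * ρ ∧
      τ.support ∪ ρ.support ⊆ σ.support :=
  stmt_1_general σ k hk3 hcyc hcard
end

section
/- Let σ be a disjoint product of two or more 3-cycles. Then there exist balanced permutations ρ, τ such that σ = τρ and supp(τ) ∪ supp(ρ) ⊆ supp(σ). -/
open Equiv

open Equiv.Perm

/-! A product of an even number of disjoint 3-cycles is balanced, so only an odd number of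
them needs work. Then write `σ = b * c * μ` with `b`, `c` two of the 3-cycles; since
`b ^ 3 = 1` and the factors commute, `σ = (b⁻¹ * c) * (b⁻¹ * μ)`, and each factor is again a
product of an even number of disjoint 3-cycles, supported inside `supp σ`. -/

theorem inv_mul_mul_inv_mul_eq {G : Type*} [Group G] {b c : G} (p : G) (hbc : Commute b c)
    (hb : b ^ 3 = 1) : b⁻¹ * c * (b⁻¹ * p) = b * (c * p) := by
  have hbb : b⁻¹ * b⁻¹ = b := by
    rw [← mul_inv_rev, inv_eq_iff_mul_eq_one, ← pow_two, ← pow_succ, hb]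
  rw [mul_assoc, ← mul_assoc c, (hbc.inv_left).symm.eq, mul_assoc, ← mul_assoc, hbb]

section

variable {X : Type*} [Fintype X] [DecidableEq X]

theorem Equiv.Perm.cycleType_list_prod_of_isThreeCycle {M : List (Perm X)}
    (hM : ∀ γ ∈ M, γ.IsThreeCycle) (hdisj : M.Pairwise Disjoint) :
    M.prod.cycleType = Multiset.replicate M.length 3 := by
  have hcard : ∀ n ∈ M.map (Finset.card ∘ support), n = 3 := by
    simpa using fun γ hγ => (hM γ hγ).card_support
  rw [cycleType_eq M rfl (fun γ hγ => (hM γ hγ).isCycle) hdisj, List.eq_replicate_of_mem hcard]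
  simp [Multiset.coe_replicate]

theorem permBalanced_list_prod {M : List (Perm X)} (hM : ∀ γ ∈ M, γ.IsThreeCycle)
    (hdisj : M.Pairwise Disjoint) (heven : Even M.length) :
    PermBalanced M.prod := by
  intro k _
  rw [cycleType_list_prod_of_isThreeCycle hM hdisj, Multiset.count_replicate]
  split_ifs
  exacts [heven, Even.zero]

theorem permBalanced_mul_list_prod {b : Perm X} {M : List (Perm X)} (hb : b.IsThreeCycle)
    (hM : ∀ γ ∈ M, γ.IsThreeCycle) (hdisj : M.Pairwise Disjoint) (hbM : ∀ γ ∈ M, b.Disjoint γ)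
    (hodd : Odd M.length) : PermBalanced (b * M.prod) :=
  permBalanced_list_prod (M := b :: M) (by simpa [hb] using hM)
    (List.pairwise_cons.2 ⟨hbM, hdisj⟩) (by simpa [Nat.even_add_one] using hodd)

theorem support_inv_mul_union_support_inv_mul_subset {b c p : Perm X} (hbc : b.Disjoint c)
    (hbp : b.Disjoint p) (hcp : c.Disjoint p) :
    (b⁻¹ * c).support ∪ (b⁻¹ * p).support ⊆ (b * (c * p)).support := by
  rw [(hbc.mul_right hbp).support_mul, hcp.support_mul]
  refine Finset.union_subset ((support_mul_le _ _).trans ?_) ((support_mul_le _ _).trans ?_) <;>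
    simp only [support_inv, Finset.sup_eq_union] <;> grind

end

theorem stmt_3 {X : Type*} [Fintype X] [DecidableEq X] (σ : Equiv.Perm X)
    (L : List (Equiv.Perm X)) (hlen : 2 ≤ L.length)
    (hcyc : ∀ γ ∈ L, γ.IsCycle ∧ γ.support.card = 3)
    (hdisj : L.Pairwise Equiv.Perm.Disjoint) (hσ : σ = L.prod) :
    ∃ ρ τ : Equiv.Perm X, PermBalanced ρ ∧ PermBalanced τ ∧ σ = τ * ρ ∧
      τ.support ∪ ρ.support ⊆ σ.support := by
  have h3 : ∀ γ ∈ L, γ.IsThreeCycle := fun γ hγ => card_support_eq_three_iff.1 (hcyc γ hγ).2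
  rcases Nat.even_or_odd L.length with heven | hodd
  · exact ⟨σ, 1, hσ ▸ permBalanced_list_prod h3 hdisj heven, by simp [PermBalanced], by simp,
      by simp⟩
  obtain ⟨b, c, M, rfl⟩ : ∃ b c M, L = b :: c :: M := by
    match L, hlen with
    | b :: c :: M, _ => exact ⟨b, c, M, rfl⟩
  simp only [List.mem_cons, forall_eq_or_imp] at h3
  simp only [List.pairwise_cons, List.mem_cons, forall_eq_or_imp] at hdisj
  obtain ⟨hb, hc, hM⟩ := h3
  obtain ⟨⟨hbc, hbM⟩, hcM, hdisjM⟩ := hdisj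
  have hModd : Odd M.length := by simpa [Nat.odd_add_one, Nat.even_add_one] using hodd
  have hτ : PermBalanced (b⁻¹ * c) := by
    simpa using permBalanced_mul_list_prod (M := [c]) hb.inv (by simpa using hc) (by simp)
      (by simpa using hbc.inv_left) (by simp)
  have hρ : PermBalanced (b⁻¹ * M.prod) :=
    permBalanced_mul_list_prod hb.inv hM hdisjM (fun γ hγ => (hbM γ hγ).inv_left) hModd
  refine ⟨b⁻¹ * M.prod, b⁻¹ * c, hρ, hτ, ?_, ?_⟩
  · rw [hσ, List.prod_cons, List.prod_cons,
      inv_mul_mul_inv_mul_eq _ hbc.commute (hb.orderOf ▸ pow_orderOf_eq_one b)]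
  · rw [hσ, List.prod_cons, List.prod_cons]
    exact support_inv_mul_union_support_inv_mul_subset hbc (disjoint_prod_right M hbM)
      (disjoint_prod_right M hcM)
end

section
/- Let σ be a 3-cycle in S(X), where |X| ≥ 5. Then there exist balanced permutations ρ, τ such that σ = τρ. -/
open Equiv

/-!
Write the 3-cycle as a product of two transpositions, `σ = (a b)(b c)`, and pick two points
`d ≠ e` outside its support (possible as `|X| ≥ 5`). Then `ρ = (b c)(d e)` and `τ = (a b)(d e)`
each have cycle type `{2, 2}`, hence are balanced, and `τ ρ = (a b)(b c)(d e)² = σ`.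
-/

theorem permBalanced_swap_mul_swap {X : Type*} [Fintype X] [DecidableEq X] {x y z t : X}
    (h : [x, y, z, t].Nodup) : PermBalanced (swap x y * swap z t) := by
  intro k _
  rw [Perm.cycleType_swap_mul_swap_of_nodup h]
  rcases eq_or_ne k 2 with rfl | hk
  · simp
  · simp [hk]

theorem Equiv.Perm.exists_pair_notMem_support {X : Type*} [Fintype X] [DecidableEq X]
    (σ : Perm X) (h : σ.support.card + 2 ≤ Fintype.card X) :
    ∃ d e, d ∉ σ.support ∧ e ∉ σ.support ∧ d ≠ e := by
  have : 1 < σ.supportᶜ.card := by rw [Finset.card_compl]; omega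
  obtain ⟨d, hd, e, he, hde⟩ := Finset.one_lt_card.mp this
  exact ⟨d, e, Finset.mem_compl.mp hd, Finset.mem_compl.mp he, hde⟩

theorem stmt_5_general {X : Type*} [Fintype X] [DecidableEq X] (hX : 5 ≤ Fintype.card X)
    (σ : Equiv.Perm X) (hcard : σ.support.card = 3) :
    ∃ ρ τ : Equiv.Perm X, PermBalanced ρ ∧ PermBalanced τ ∧ σ = τ * ρ := by
  have hσ : σ.IsThreeCycle := card_support_eq_three_iff.mp hcard
  obtain ⟨a, ha⟩ := Finset.card_pos.mp (by omega : 0 < σ.support.card)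
  obtain ⟨d, e, hd, he, hde⟩ := σ.exists_pair_notMem_support (by omega)
  have hsupp := hσ.support_eq_iff_mem_support.mpr ha
  have habc := hσ.nodup_iff_mem_support.mpr ha
  set b := σ a
  set c := σ b
  rw [hsupp] at hd he
  have hρ : [b, c, d, e].Nodup := by simp_all; grind
  have hτ : [a, b, d, e].Nodup := by simp_all; grind
  refine ⟨swap b c * swap d e, swap a b * swap d e,
    permBalanced_swap_mul_swap hρ, permBalanced_swap_mul_swap hτ, ?_⟩
  calc σ = swap a b * swap b c := hσ.eq_swap_mul_swap_iff_mem_support.mpr ha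
    _ = swap a b * swap d e * (swap b c * swap d e) := by
      rw [mul_assoc, ← mul_assoc (swap d e), (Perm.disjoint_swap_swap hρ).symm.commute.eq,
        mul_assoc, swap_mul_self, mul_one]

theorem stmt_5 {X : Type*} [Fintype X] [DecidableEq X] (hX : 5 ≤ Fintype.card X)
    (σ : Equiv.Perm X) (hcyc : σ.IsCycle) (hcard : σ.support.card = 3) :
    ∃ ρ τ : Equiv.Perm X, PermBalanced ρ ∧ PermBalanced τ ∧ σ = τ * ρ :=
  stmt_5_general hX σ hcard
end

section
/- Let A be a finite set and τ ∈ S(A × 2) be a balanced permutation. Then there exist permutations g ∈ S(A × 2) and h ∈ S(A) such that τ = g⁻¹ (h × id₂) g. -/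
open Equiv

/-!
`h × id₂` is the product of two disjoint copies of `h`, one on each sheet `A × {b}`, so its
cycle type is `2 • cycleType h`. A balanced `τ` has cycle type `2 • m` for some multiset `m`,
and `m` is the cycle type of some `h ∈ S(A)` because `2 * m.sum ≤ |A × 2|`. Permutations with
the same cycle type are conjugate.
-/

open Equiv.Perm

def sheetEquiv {A B : Type*} (b : B) : A ≃ {x : A × B // x.2 = b} where
  toFun a := ⟨(a, b), rfl⟩
  invFun x := x.1.1
  left_inv _ := rfl
  right_inv := by rintro ⟨⟨a, c⟩, rfl⟩; rfl

section Sheets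

variable {A B : Type*} [DecidableEq B] (h : Perm A)

lemma extendDomain_sheetEquiv_apply (b : B) (a : A) :
    h.extendDomain (sheetEquiv b) (a, b) = (h a, b) :=
  extendDomain_apply_subtype (p := fun x : A × B => x.2 = b) _ _ rfl

lemma extendDomain_sheetEquiv_apply_of_ne {b c : B} (hcb : c ≠ b) (a : A) :
    h.extendDomain (sheetEquiv b) (a, c) = (a, c) :=
  extendDomain_apply_not_subtype _ _ hcb

lemma disjoint_extendDomain_sheetEquiv {b c : B} (hbc : b ≠ c) :
    Disjoint (h.extendDomain (sheetEquiv b)) (h.extendDomain (sheetEquiv c)) := by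
  rintro ⟨a, d⟩
  by_cases hdb : d = b
  · subst hdb
    exact Or.inr (extendDomain_sheetEquiv_apply_of_ne h hbc a)
  · exact Or.inl (extendDomain_sheetEquiv_apply_of_ne h hdb a)

end Sheets

lemma prodCongr_refl_bool_eq_mul {A : Type*} (h : Perm A) :
    prodCongr h (Equiv.refl Bool) =
      h.extendDomain (sheetEquiv false) * h.extendDomain (sheetEquiv true) := by
  ext ⟨a, b⟩ <;> cases b <;>
    simp [extendDomain_sheetEquiv_apply, extendDomain_sheetEquiv_apply_of_ne]

lemma cycleType_prodCongr_refl_bool {A : Type*} [Fintype A] [DecidableEq A] (h : Perm A) :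
    Perm.cycleType (prodCongr h (Equiv.refl Bool)) = 2 • h.cycleType := by
  rw [prodCongr_refl_bool_eq_mul,
    (disjoint_extendDomain_sheetEquiv h Bool.false_ne_true).cycleType_mul, cycleType_extendDomain, cycleType_extendDomain, two_nsmul]

lemma PermBalanced.exists_cycleType_eq_two_nsmul {X : Type*} [Fintype X] [DecidableEq X]
    {σ : Perm X} (hσ : PermBalanced σ) : ∃ m : Multiset ℕ, σ.cycleType = 2 • m :=
  Multiset.exists_smul_of_dvd_count σ.cycleType
    fun k hk => (hσ k (two_le_of_mem_cycleType hk)).two_dvd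

lemma exists_cycleType_eq_of_cycleType_eq_two_nsmul {A : Type*} [Fintype A] [DecidableEq A]
    {σ : Perm (A × Bool)} {m : Multiset ℕ} (hσ : σ.cycleType = 2 • m) :
    ∃ h : Perm A, h.cycleType = m := by
  have hsum : (2 • m).sum ≤ Fintype.card (A × Bool) :=
    hσ ▸ sum_cycleType σ ▸ σ.support.card_le_univ
  rw [Multiset.sum_nsmul, Fintype.card_prod, Fintype.card_bool, smul_eq_mul] at hsum
  refine (exists_with_cycleType_iff A).mpr ⟨by omega, fun k hk => ?_⟩
  exact two_le_of_mem_cycleType (hσ ▸ (Multiset.mem_nsmul_of_ne_zero two_ne_zero).mpr hk)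

theorem stmt_8 {A : Type*} [Fintype A] [DecidableEq A] (τ : Equiv.Perm (A × Bool))
    (hτ : PermBalanced τ) :
    ∃ (g : Equiv.Perm (A × Bool)) (h : Equiv.Perm A),
      τ = g⁻¹ * Equiv.prodCongr h (Equiv.refl Bool) * g := by
  obtain ⟨m, hm⟩ := hτ.exists_cycleType_eq_two_nsmul
  obtain ⟨h, hh⟩ := exists_cycleType_eq_of_cycleType_eq_two_nsmul hm
  have hconj : IsConj (prodCongr h (Equiv.refl Bool)) τ := by
    rw [isConj_iff_cycleType_eq, cycleType_prodCongr_refl_bool, hh, hm]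
  obtain ⟨c, hc⟩ := isConj_iff.mp hconj
  exact ⟨c⁻¹, h, by rw [inv_inv, ← hc]⟩
end

section
/- Let A be a finite set and τ ∈ S(A × 2) be balanced, and let σ = id_{A×2} + τ ∈ S(2 × A × 2) (i.e., σ acts as the identity on {0} × A × 2 and as τ on {1} × A × 2). Then there exist permutations g ∈ S(A × 2) and f ∈ S(2 × A) such that σ = (id₂ × g⁻¹)(f × id₂)(id₂ × g). -/
open Equiv

/-
Proof idea: a balanced permutation τ of A × 2 has cycle type m + m for some multiset m, and m is
the cycle type of some u ∈ S(A) because m sums to at most |A|. Then u × id₂ has cycle type m + m as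
well, so τ = c (u × id₂) c⁻¹ for some c. Since id + (u × id₂) = (id₂ + u) × id₂ and conjugating the
second summand by c is conjugation by id₂ × c, we may take g = c⁻¹ and f = id + u.
-/

theorem Multiset.exists_add_self_eq_of_forall_even_count {α : Type*} [DecidableEq α]
    {s : Multiset α} (h : ∀ a, Even (s.count a)) : ∃ m : Multiset α, m + m = s := by
  refine ⟨∑ a ∈ s.toFinset, replicate (s.count a / 2) a, ext.2 fun b => ?_⟩
  simp only [count_add, count_sum', count_replicate, Finset.sum_ite_eq', mem_toFinset]
  split_ifs with hb
  · obtain ⟨n, hn⟩ := h b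
    omega
  · simp [count_eq_zero_of_notMem hb]

theorem PermBalanced.even_count_cycleType {X : Type*} [Fintype X] [DecidableEq X]
    {τ : Perm X} (hτ : PermBalanced τ) (k : ℕ) : Even (τ.cycleType.count k) := by
  rcases le_or_gt 2 k with hk | hk
  · exact hτ k hk
  · rw [Multiset.count_eq_zero_of_notMem fun hmem => (Perm.two_le_of_mem_cycleType hmem).not_gt hk]
    exact Even.zero

namespace Equiv.Perm

variable {A : Type*}

def boolSlice (c : Bool) : A ≃ {x : A × Bool // x.2 = c} where
  toFun a := ⟨(a, c), rfl⟩
  invFun x := x.1.1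
  left_inv _ := rfl
  right_inv := by rintro ⟨⟨a, b⟩, rfl⟩; rfl

theorem prodCongr_refl_bool_eq_mul (u : Perm A) :
    prodCongr u (Equiv.refl Bool) =
      u.extendDomain (boolSlice false) * u.extendDomain (boolSlice true) := by
  ext ⟨a, (_ | _)⟩ : 1
  · rw [mul_apply, extendDomain_apply_not_subtype u (boolSlice true) (b := (a, false)) (by simp),
      extendDomain_apply_subtype u (boolSlice false) (b := (a, false)) rfl]
    rfl
  · rw [mul_apply, extendDomain_apply_subtype u (boolSlice true) (b := (a, true)) rfl]
    exact (extendDomain_apply_not_subtype u (boolSlice false) (b := (u a, true)) (by simp)).symm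

theorem disjoint_extendDomain_boolSlice (u v : Perm A) :
    Disjoint (u.extendDomain (boolSlice false)) (v.extendDomain (boolSlice true)) := by
  rintro ⟨a, (_ | _)⟩
  · exact .inr (extendDomain_apply_not_subtype _ _ (by simp))
  · exact .inl (extendDomain_apply_not_subtype _ _ (by simp))

theorem cycleType_prodCongr_refl_bool [Fintype A] [DecidableEq A] (u : Perm A) :
    cycleType (prodCongr u (Equiv.refl Bool) : Perm (A × Bool)) = u.cycleType + u.cycleType := by
  rw [prodCongr_refl_bool_eq_mul, (disjoint_extendDomain_boolSlice u u).cycleType_mul,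
    cycleType_extendDomain, cycleType_extendDomain]

end Equiv.Perm

theorem PermBalanced.exists_isConj_prodCongr_refl_bool {A : Type*} [Fintype A] [DecidableEq A]
    {τ : Perm (A × Bool)} (hτ : PermBalanced τ) :
    ∃ u : Perm A, IsConj (prodCongr u (Equiv.refl Bool) : Perm (A × Bool)) τ := by
  obtain ⟨m, hm⟩ := Multiset.exists_add_self_eq_of_forall_even_count hτ.even_count_cycleType
  have two_le : ∀ a ∈ m, 2 ≤ a := fun a ha =>
    Perm.two_le_of_mem_cycleType (hm ▸ Multiset.mem_add.2 (.inl ha))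
  have sum_le : m.sum ≤ Fintype.card A := by
    have h := τ.support.card_le_univ
    rw [← Perm.sum_cycleType, ← hm, Multiset.sum_add, Fintype.card_prod, Fintype.card_bool] at h
    omega
  obtain ⟨u, hu⟩ := (Perm.exists_with_cycleType_iff A).2 ⟨sum_le, two_le⟩
  exact ⟨u, Perm.isConj_iff_cycleType_eq.2 (by rw [Perm.cycleType_prodCongr_refl_bool, hu, hm])⟩

section Factors

variable {A X : Type*}

theorem dsum_mul (g g' h h' : Perm X) : dsum (g * g') (h * h') = dsum g h * dsum g' h' := by
  ext ⟨(_ | _), x⟩ <;> rfl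

theorem rightFactor_eq_dsum (g : Perm (A × Bool)) : rightFactor g = dsum g g := by
  ext ⟨(_ | _), x⟩ <;> rfl

theorem leftFactor_dsum_one (u : Perm A) :
    leftFactor (dsum 1 u) = dsum 1 (prodCongr u (Equiv.refl Bool)) := by
  ext ⟨(_ | _), a, d⟩ <;> rfl

theorem dsum_one_conj (c π : Perm X) :
    dsum 1 (c * π * c⁻¹) = dsum c c * dsum 1 π * dsum c⁻¹ c⁻¹ := by
  rw [← dsum_mul, ← dsum_mul, mul_one, mul_inv_cancel]

end Factors

theorem stmt_9 {A : Type*} [Fintype A] [DecidableEq A] (τ : Equiv.Perm (A × Bool))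
    (hτ : PermBalanced τ) :
    ∃ (g : Equiv.Perm (A × Bool)) (f : Equiv.Perm (Bool × A)),
      dsum 1 τ = rightFactor g⁻¹ * leftFactor f * rightFactor g := by
  obtain ⟨u, hu⟩ := hτ.exists_isConj_prodCongr_refl_bool
  obtain ⟨c, rfl⟩ := isConj_iff.1 hu
  refine ⟨c⁻¹, dsum 1 u, ?_⟩
  rw [inv_inv, rightFactor_eq_dsum, rightFactor_eq_dsum, leftFactor_dsum_one, dsum_one_conj]
end

section
/- Let c be a regular coloring of 2 × A × 2 (A finite). Then there exists g ∈ S(A × 2) such that (id₂ × g) · c is symmetric. -/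
open Equiv

/-
Write p x := (c(0,x), c(1,x)) for the colour pair of x ∈ A × 2. Regularity says that every fibre of
p has even size, so each fibre splits into pairs. If S is the set of all these pairs, then
A × 2 ≃ S × 2 with p constant on each {s} × 2; counting gives |S| = |A|, so A ≃ S, and the resulting
permutation of A × 2 sends (a,0) and (a,1) to points with the same colour pair.
-/
lemma Finite.nonempty_equiv_fin_half_prod_bool {β : Type*} [Finite β] (h : Even (Nat.card β)) :
    Nonempty (β ≃ Fin (Nat.card β / 2) × Bool) := by
  obtain ⟨m, hm⟩ := h
  rw [← Finite.card_eq, Nat.card_prod, Nat.card_eq_fintype_card (α := Fin _), Fintype.card_fin,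
    Nat.card_eq_fintype_card (α := Bool), Fintype.card_bool]
  omega

theorem exists_equiv_prod_bool_apply_false_eq_apply_true {α X Y : Type*} [Finite α] [Finite X]
    (f : X → Y) (hf : ∀ y, Even (Nat.card {x // f x = y})) (hcard : Nat.card X = 2 * Nat.card α) :
    ∃ e : α × Bool ≃ X, ∀ a, f (e (a, false)) = f (e (a, true)) := by
  let S := Σ y, Fin (Nat.card {x // f x = y} / 2)
  let pair : ∀ y, {x // f x = y} ≃ Fin (Nat.card {x // f x = y} / 2) × Bool := fun y =>
    (Finite.nonempty_equiv_fin_half_prod_bool (hf y)).some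
  let E : S × Bool ≃ X := (Equiv.sigmaProdDistrib _ _).trans <|
    (Equiv.sigmaCongrRight fun y => (pair y).symm).trans (Equiv.sigmaFiberEquiv f)
  have hE : ∀ s b, f (E (s, b)) = s.1 := fun s b => ((pair s.1).symm (s.2, b)).2
  have : Finite (S × Bool) := .of_equiv X E.symm
  have : Finite S := .prod_left Bool
  have hS : Nat.card S = Nat.card α := by
    have := Nat.card_congr E
    rw [Nat.card_prod, Nat.card_eq_fintype_card (α := Bool), Fintype.card_bool] at this
    omega
  obtain ⟨eS⟩ := Finite.card_eq.mp hS.symm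
  exact ⟨(Equiv.prodCongr eS (Equiv.refl Bool)).trans E, fun a => by simp [hE]⟩

theorem stmt_16_general {A : Type*} [Fintype A] (c : Bool × A × Bool → Bool)
    (hreg : ∀ i j : Bool,
      Even (Finset.univ.filter fun x : A × Bool =>
        c (false, x) = i ∧ c (true, x) = j).card) :
    ∃ g : Equiv.Perm (A × Bool), ∀ (i : Bool) (a : A),
      c ((rightFactor g)⁻¹ (i, a, false)) = c ((rightFactor g)⁻¹ (i, a, true)) := by
  let colorPair : A × Bool → Bool × Bool := fun x => (c (false, x), c (true, x))
  have hfibre : ∀ y, Even (Nat.card {x // colorPair x = y}) := by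
    rintro ⟨i, j⟩
    simpa [Nat.card_eq_fintype_card, Fintype.card_subtype, colorPair, Prod.ext_iff] using hreg i j
  obtain ⟨e, he⟩ := exists_equiv_prod_bool_apply_false_eq_apply_true (α := A) colorPair hfibre (by
    rw [Nat.card_prod, Nat.card_eq_fintype_card (α := Bool), Fintype.card_bool, mul_comm])
  refine ⟨e.symm, fun i a => ?_⟩
  show c (i, e (a, false)) = c (i, e (a, true))
  cases i
  exacts [congrArg Prod.fst (he a), congrArg Prod.snd (he a)]

theorem stmt_16 {A : Type*} [Fintype A] [DecidableEq A] (c : Bool × A × Bool → Bool)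
    (hreg : ∀ i j : Bool,
      Even (Finset.univ.filter fun x : A × Bool =>
        c (false, x) = i ∧ c (true, x) = j).card) :
    ∃ g : Equiv.Perm (A × Bool), ∀ (i : Bool) (a : A),
      c ((rightFactor g)⁻¹ (i, a, false)) = c ((rightFactor g)⁻¹ (i, a, true)) :=
  stmt_16_general c hreg
end

section
/- Let A be a finite set with |A| ≥ 3 and c a fair coloring of 2 × A × 2. Then there exists a permutation σ ∈ S(2 × A × 2) of alternation depth at most 4 such that σ · c is the standard coloring. -/
open Equiv

/-!
Record a coloring `c` by its blocks, the `2 × 2` arrays `(i, y) ↦ c (i, a, y)` for `a ∈ A`.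
A factor `id₂ × g` realises every rearrangement of the `2|A|` columns of all blocks, and a factor
`f × id₂` every rearrangement of their rows, so only the multisets of columns and rows matter.
Pairing equal columns, and the at most four distinct leftover columns with total Hamming distance
at most `2`, gives blocks with at most two non-constant rows. Putting each of these on top of a row
`(1, 1)` (there are enough of them by fairness and `|A| ≥ 3`) and pairing the constant rows
arbitrarily gives blocks whose columns come in equal pairs. Pairing equal columns then gives blocks
with constant rows, `|A|` of each colour by fairness, and one last row move sorts them into the
standard coloring.
-/

namespace FairColoring

open Multiset

lemma map_univ_val_eq_sum {α β : Type*} [Fintype α] (f : α → β) :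
    (Finset.univ : Finset α).val.map f = ∑ x, ({f x} : Multiset β) := by
  rw [← Finset.sum_map_val, ← sum_map_singleton (Finset.univ.val.map f), Multiset.map_map]
  rfl

lemma exists_perm_comp_eq {α β : Type*} [Fintype α] [DecidableEq β] {f g : α → β}
    (h : (Finset.univ : Finset α).val.map f = Finset.univ.val.map g) :
    ∃ e : Equiv.Perm α, ∀ x, f (e x) = g x := by
  have hfiber (b : β) : Fintype.card {x // g x = b} = Fintype.card {x // f x = b} := by
    have := congrArg (count b) h.symm
    simp only [count_map] at this
    simp only [Fintype.card_subtype, @eq_comm _ _ b]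
    exact this
  refine ⟨(Equiv.sigmaFiberEquiv g).symm.trans ((Equiv.sigmaCongrRight fun b =>
    Fintype.equivOfCardEq (hfiber b)).trans (Equiv.sigmaFiberEquiv f)), fun x => ?_⟩
  exact (Fintype.equivOfCardEq (hfiber (g x)) ⟨x, rfl⟩).2

/-- A 2 × 2 array `x : Bool → Bool → Bool`, stored as its two columns
`((x 0 0, x 1 0), (x 0 1, x 1 1))`. -/
abbrev Block := (Bool × Bool) × (Bool × Bool)

def Block.transpose (q : Block) : Block := ((q.1.1, q.2.1), (q.1.2, q.2.2))

@[simp] lemma Block.transpose_transpose (q : Block) : q.transpose.transpose = q := rfl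

def cols (M : Multiset Block) : Multiset (Bool × Bool) := M.map Prod.fst + M.map Prod.snd

def rows (M : Multiset Block) : Multiset (Bool × Bool) := cols (M.map Block.transpose)

def weight (X : Multiset (Bool × Bool)) : ℕ := (X.map fun r => r.1.toNat + r.2.toNat).sum

@[simp] lemma cols_zero : cols 0 = 0 := rfl

@[simp] lemma cols_add (M N : Multiset Block) : cols (M + N) = cols M + cols N := by
  simp only [cols, Multiset.map_add]; abel

@[simp] lemma cols_cons (q : Block) (M : Multiset Block) :
    cols (q ::ₘ M) = q.1 ::ₘ q.2 ::ₘ cols M := by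
  simp [cols, Multiset.cons_add, Multiset.add_cons, Multiset.cons_swap]

lemma card_cols (M : Multiset Block) : card (cols M) = 2 * card M := by
  simp [cols]; ring

lemma card_rows (M : Multiset Block) : card (rows M) = card (cols M) := by
  simp [rows, card_cols]

@[simp] lemma weight_add (X Y : Multiset (Bool × Bool)) :
    weight (X + Y) = weight X + weight Y := by
  simp [weight]

lemma weight_rows (M : Multiset Block) : weight (rows M) = weight (cols M) := by
  simp only [rows, cols, weight, Multiset.map_add, Multiset.sum_add, Multiset.map_map,
    ← Multiset.sum_map_add]
  refine congrArg Multiset.sum (Multiset.map_congr rfl fun q _ => ?_)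
  rcases q with ⟨⟨_ | _, _ | _⟩, _ | _, _ | _⟩ <;> rfl

lemma weight_eq_card_of_forall_ne {Z : Multiset (Bool × Bool)} (hZ : ∀ r ∈ Z, r.1 ≠ r.2) :
    weight Z = card Z := by
  have hone : ∀ r ∈ Z, r.1.toNat + r.2.toNat = 1 := by
    rintro ⟨_ | _, _ | _⟩ hr <;> simp_all
  simp [weight, Multiset.map_congr rfl hone]

lemma exists_eq_replicate_add_replicate {C : Multiset (Bool × Bool)} (hC : ∀ r ∈ C, r.1 = r.2)
    (hweight : weight C = card C) :
    ∃ a, C = replicate a (false, false) + replicate a (true, true) := by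
  obtain ⟨a, b, hform⟩ :
      ∃ a b, C = replicate a (false, false) + replicate b (true, true) := by
    refine ⟨count (false, false) C, count (true, true) C, ?_⟩
    ext ⟨_ | _, _ | _⟩ <;> simp [count_replicate, count_eq_zero] <;>
      exact fun h => by simpa using hC _ h
  subst hform
  simp [weight] at hweight
  exact ⟨a, by congr 2; omega⟩

lemma exists_cols_eq_of_nodup {X : Multiset (Bool × Bool)} (hX : X.Nodup) (heven : Even (card X)) :
    ∃ M, cols M = X ∧ (rows M).countP (fun r => r.1 ≠ r.2) ≤ 2 := by
  have hle : card X ≤ 4 := by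
    simpa using Finset.card_le_univ (⟨X, hX⟩ : Finset (Bool × Bool))
  obtain h | h | h : card X = 0 ∨ card X = 2 ∨ card X = 4 := by
    obtain ⟨k, hk⟩ := heven; omega
  · exact ⟨0, by simp [card_eq_zero.1 h], by simp [rows]⟩
  · obtain ⟨u, v, rfl⟩ := card_eq_two.1 h
    refine ⟨{(u, v)}, by simp [cols], (countP_le_card _ _).trans ?_⟩
    simp [rows, cols]
  · obtain rfl : X = Finset.univ.val :=
      congrArg Finset.val (Finset.eq_univ_of_card (⟨X, hX⟩ : Finset (Bool × Bool)) (by simpa))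
    -- two pairs of columns at Hamming distance 1
    exact ⟨{((true, true), (true, false)), ((false, false), (false, true))}, by decide,
      by decide⟩

/-- Equal columns are paired off first; at most four distinct columns are left. -/
theorem exists_cols_eq (X : Multiset (Bool × Bool)) (heven : Even (card X)) :
    ∃ M, cols M = X ∧ (rows M).countP (fun r => r.1 ≠ r.2) ≤ 2 := by
  induction X using Multiset.strongInductionOn with
  | ih X ih =>
  by_cases hdup : ∃ x, 2 ≤ count x X
  · obtain ⟨x, hx⟩ := hdup
    obtain ⟨X', rfl⟩ : ∃ X', X = x ::ₘ x ::ₘ X' := by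
      obtain ⟨X', hX'⟩ := Multiset.le_iff_exists_add.1 (le_count_iff_replicate_le.1 hx)
      exact ⟨X', by simpa [replicate_succ] using hX'⟩
    obtain ⟨M, rfl, hM⟩ := ih _ (lt_cons_self _ _ |>.trans (lt_cons_self _ _))
      (by simpa [parity_simps] using heven)
    exact ⟨(x, x) ::ₘ M, by simp, by simpa [rows, Block.transpose] using hM⟩
  · push Not at hdup
    exact exists_cols_eq_of_nodup (nodup_iff_count_le_one.2 fun x => by grind) heven

lemma cols_map_transpose_of_forall_ne {Z : Multiset (Bool × Bool)}
    (hZ : ∀ m ∈ Z, m.1 ≠ m.2) :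
    cols (Z.map fun m => Block.transpose (m, (true, true))) =
      replicate (card Z) (true, true) + replicate (card Z) (false, true) := by
  induction Z using Multiset.induction_on with
  | empty => simp
  | cons m Z ih =>
    simp only [forall_mem_cons] at hZ
    rw [Multiset.map_cons, cols_cons, ih hZ.2, card_cons, replicate_succ, replicate_succ,
      add_cons, cons_add]
    rcases m with ⟨_ | _, _ | _⟩
    · exact absurd rfl hZ.1
    · simp [Block.transpose]
    · simpa [Block.transpose] using cons_swap _ _ _
    · exact absurd rfl hZ.1

lemma cols_map_transpose_of_forall_eq {P : Multiset Block} (hP : ∀ r ∈ cols P, r.1 = r.2) :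
    cols (P.map Block.transpose) =
      P.map (fun q => (q.1.1, q.2.1)) + P.map (fun q => (q.1.1, q.2.1)) := by
  have hq : ∀ q ∈ P, q.1.1 = q.1.2 ∧ q.2.1 = q.2.2 := fun q hq =>
    ⟨hP q.1 (by simp [cols, mem_map_of_mem _ hq]), hP q.2 (by simp [cols, mem_map_of_mem _ hq])⟩
  simp only [cols, Multiset.map_map]
  congr 1
  exact Multiset.map_congr rfl fun q hqP => by simp [Block.transpose, (hq q hqP).1, (hq q hqP).2]

/-- Place each non-constant row on top of a row `(1, 1)`: whatever its kind, the block gets the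
columns `(1, 1)` and `(0, 1)`. Constant rows can be paired arbitrarily. -/
theorem exists_rows_eq_cols_eq_add_self (Y : Multiset (Bool × Bool)) (heven : Even (card Y))
    (hweight : weight Y = card Y) (hmixed : 3 * Y.countP (fun r => r.1 ≠ r.2) ≤ card Y) :
    ∃ M W, rows M = Y ∧ cols M = W + W := by
  set Z := Y.filter fun r => r.1 ≠ r.2 with hZ
  have hZY : Z + Y.filter (fun r => ¬ r.1 ≠ r.2) = Y := filter_add_not _ Y
  have hZmixed : ∀ m ∈ Z, m.1 ≠ m.2 := fun m hm => (mem_filter.1 hm).2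
  obtain ⟨a, ha⟩ := exists_eq_replicate_add_replicate (C := Y.filter fun r => ¬ r.1 ≠ r.2)
    (fun r hr => not_not.1 (mem_filter.1 hr).2)
    (by have hw := congrArg weight hZY; have hc := congrArg card hZY
        rw [weight_add, weight_eq_card_of_forall_ne hZmixed] at hw
        rw [card_add] at hc; omega)
  rw [ha] at hZY
  have hcard := congrArg card hZY
  simp only [card_add, card_replicate] at hcard
  rw [countP_eq_card_filter, ← hZ] at hmixed
  obtain ⟨j, hj⟩ : Even (card Z) := by
    obtain ⟨k, hk⟩ := heven; exact ⟨k - a, by omega⟩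
  obtain ⟨d, rfl⟩ : ∃ d, a = card Z + d := ⟨a - card Z, by omega⟩
  obtain ⟨P, hP, -⟩ :=
    exists_cols_eq (replicate (card Z + d) (false, false) + replicate d (true, true))
      (by simp; exact ⟨j + d, by omega⟩)
  refine ⟨Z.map (fun m => Block.transpose (m, (true, true))) + P.map Block.transpose,
    replicate j (true, true) + replicate j (false, true) + P.map (fun q => (q.1.1, q.2.1)),
    ?_, ?_⟩
  · rw [← hZY, rows, Multiset.map_add, cols_add, Multiset.map_map, Multiset.map_map]
    simp only [Function.comp_def, Block.transpose_transpose, map_id']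
    rw [hP]
    simp [cols, replicate_add]
    abel
  · rw [cols_add, cols_map_transpose_of_forall_ne hZmixed, cols_map_transpose_of_forall_eq, hj]
    · simp only [replicate_add]; abel
    · rw [hP]; simp +contextual [or_imp, mem_replicate]

-- `((0, 1), (0, 1))` is the block of the standard coloring.
theorem exists_block_path {n : ℕ} (X : Multiset (Bool × Bool)) (hcard : card X = 2 * n)
    (hweight : weight X = 2 * n) (hn : 3 ≤ n) :
    ∃ M₁ M₂ M₃ : Multiset Block, cols M₁ = X ∧ rows M₂ = rows M₁ ∧ cols M₃ = cols M₂ ∧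
      rows M₃ = rows (replicate n ((false, true), (false, true))) := by
  obtain ⟨M₁, rfl, hmixed⟩ := exists_cols_eq X ⟨n, by omega⟩
  obtain ⟨M₂, W, hrows, hcols⟩ := exists_rows_eq_cols_eq_add_self (rows M₁)
    ⟨n, by rw [card_rows]; omega⟩ (by rw [weight_rows, card_rows, hweight, hcard])
    (by rw [card_rows]; omega)
  set M₃ := W.map fun w => (w, w)
  have h₃ : cols M₃ = cols M₂ := by rw [hcols]; simp [M₃, cols]
  have hweight₃ : weight (rows M₃) = 2 * n := by
    rw [weight_rows, h₃, ← weight_rows, hrows, weight_rows, hweight]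
  have hcard₃ : card (rows M₃) = 2 * n := by
    rw [card_rows, h₃, ← card_rows, hrows, card_rows, hcard]
  obtain ⟨a, ha⟩ := exists_eq_replicate_add_replicate (C := rows M₃)
    (by simp [M₃, rows, cols, Block.transpose]) (by rw [hweight₃, hcard₃])
  obtain rfl : a = n := by simp [ha] at hcard₃; omega
  refine ⟨M₁, M₂, M₃, rfl, hrows, h₃, ?_⟩
  rw [ha]; simp [rows, cols, Block.transpose]

section Colorings

variable {A : Type*}

def ReachableIn (d : ℕ) (c c' : Bool × A × Bool → Bool) : Prop :=
  ∃ σ : Equiv.Perm (Bool × A × Bool), AltDepth σ d ∧ (fun z => c (σ⁻¹ z)) = c'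

lemma ReachableIn.trans {d d' : ℕ} {c c' c'' : Bool × A × Bool → Bool}
    (h : ReachableIn d c c') (h' : ReachableIn d' c' c'') : ReachableIn (d + d') c c'' := by
  obtain ⟨_, ⟨L, hlen, hL, rfl⟩, rfl⟩ := h
  obtain ⟨_, ⟨L', hlen', hL', rfl⟩, rfl⟩ := h'
  refine ⟨L'.prod * L.prod, ⟨L' ++ L, by simp [hlen, hlen', add_comm], ?_, by simp⟩, rfl⟩
  simpa [or_imp, forall_and] using And.intro hL' hL

lemma reachableIn_one {π : Equiv.Perm (Bool × A × Bool)} (hπ : IsFactor π)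
    (c : Bool × A × Bool → Bool) : ReachableIn 1 c fun z => c (π⁻¹ z) :=
  ⟨π, ⟨[π], rfl, by simpa using hπ, by simp⟩, rfl⟩

lemma leftFactor_inv_apply (f : Equiv.Perm (Bool × A)) (i : Bool) (a : A) (y : Bool) :
    (leftFactor f)⁻¹ (i, a, y) = ((f⁻¹ (i, a)).1, (f⁻¹ (i, a)).2, y) := rfl

lemma rightFactor_inv_apply (g : Equiv.Perm (A × Bool)) (i : Bool) (m : A × Bool) :
    (rightFactor g)⁻¹ (i, m) = (i, g⁻¹ m) := rfl

variable [Fintype A]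

lemma map_univ_val_prod_bool {β : Type*} (F : A × Bool → β) :
    (Finset.univ : Finset (A × Bool)).val.map F =
      Finset.univ.val.map (fun a => F (a, false)) + Finset.univ.val.map (fun a => F (a, true)) := by
  simp only [map_univ_val_eq_sum, Fintype.sum_prod_type_right, Fintype.sum_bool, add_comm]

lemma map_univ_val_bool_prod {β : Type*} (F : Bool × A → β) :
    (Finset.univ : Finset (Bool × A)).val.map F =
      Finset.univ.val.map (fun a => F (false, a)) + Finset.univ.val.map (fun a => F (true, a)) := by
  simp only [map_univ_val_eq_sum, Fintype.sum_prod_type, Fintype.sum_bool, add_comm]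

def blocks (c : Bool × A × Bool → Bool) : Multiset Block :=
  Finset.univ.val.map fun a => ((c (false, a, false), c (true, a, false)),
    (c (false, a, true), c (true, a, true)))

lemma cols_blocks (c : Bool × A × Bool → Bool) :
    cols (blocks c) = Finset.univ.val.map fun m : A × Bool => (c (false, m), c (true, m)) := by
  simp [map_univ_val_prod_bool, cols, blocks]

lemma rows_blocks (c : Bool × A × Bool → Bool) :
    rows (blocks c) =
      Finset.univ.val.map fun p : Bool × A => (c (p.1, p.2, false), c (p.1, p.2, true)) := by
  simp [map_univ_val_bool_prod, rows, cols, blocks, Block.transpose, Function.comp_def]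

lemma weight_cols_blocks (c : Bool × A × Bool → Bool) :
    weight (cols (blocks c)) = (Finset.univ.filter fun z => c z = true).card := by
  rw [cols_blocks, weight, Multiset.map_map, Finset.sum_map_val, Finset.card_filter]
  simp only [Fintype.sum_prod_type, Fintype.sum_bool, Function.comp_apply, Finset.sum_add_distrib]
  simp [Bool.toNat, cond_eq_ite]
  ring

lemma reachableIn_one_of_cols_eq {c c' : Bool × A × Bool → Bool}
    (h : cols (blocks c') = cols (blocks c)) : ReachableIn 1 c c' := by
  rw [cols_blocks, cols_blocks] at h
  obtain ⟨e, he⟩ := exists_perm_comp_eq h.symm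
  convert reachableIn_one (Or.inr ⟨e⁻¹, rfl⟩) c using 1
  funext ⟨i, m⟩
  have := congrArg (fun r : Bool × Bool => cond i r.2 r.1) (he m)
  cases i <;> simpa [rightFactor_inv_apply] using this.symm

lemma reachableIn_one_of_rows_eq {c c' : Bool × A × Bool → Bool}
    (h : rows (blocks c') = rows (blocks c)) : ReachableIn 1 c c' := by
  rw [rows_blocks, rows_blocks] at h
  obtain ⟨e, he⟩ := exists_perm_comp_eq h.symm
  convert reachableIn_one (Or.inl ⟨e⁻¹, rfl⟩) c using 1
  funext ⟨i, a, y⟩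
  have := congrArg (fun r : Bool × Bool => cond y r.2 r.1) (he (i, a))
  cases y <;> simpa [leftFactor_inv_apply] using this.symm

lemma exists_blocks_eq (M : Multiset Block) (hM : card M = Fintype.card A) :
    ∃ c : Bool × A × Bool → Bool, blocks c = M := by
  obtain ⟨B, hB⟩ : ∃ B : A → Block, Finset.univ.val.map B = M := by
    let e : A ≃ Fin M.toList.length := Fintype.equivFinOfCardEq (by simp [hM])
    refine ⟨fun a => M.toList.get (e a), ?_⟩
    rw [show (fun a => M.toList.get (e a)) = M.toList.get ∘ e from rfl, ← Multiset.map_map,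
      Multiset.map_univ_val_equiv, Fin.univ_val_map,
      List.ofFn_get, coe_toList]
  refine ⟨fun z => cond z.2.2 (cond z.1 (B z.2.1).2.2 (B z.2.1).2.1)
    (cond z.1 (B z.2.1).1.2 (B z.2.1).1.1), ?_⟩
  rw [← hB]
  rfl

lemma exists_reachableIn_one_of_cols_eq {c : Bool × A × Bool → Bool} {M : Multiset Block}
    (h : cols M = cols (blocks c)) : ∃ c', blocks c' = M ∧ ReachableIn 1 c c' := by
  obtain ⟨c', rfl⟩ := exists_blocks_eq M (by
    have := congrArg card h
    simp only [card_cols, blocks, card_map] at this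
    simpa using this)
  exact ⟨c', rfl, reachableIn_one_of_cols_eq h⟩

lemma exists_reachableIn_one_of_rows_eq {c : Bool × A × Bool → Bool} {M : Multiset Block}
    (h : rows M = rows (blocks c)) : ∃ c', blocks c' = M ∧ ReachableIn 1 c c' := by
  obtain ⟨c', rfl⟩ := exists_blocks_eq M (by
    have := congrArg card h
    simp only [card_rows, card_cols, blocks, card_map] at this
    simpa using this)
  exact ⟨c', rfl, reachableIn_one_of_rows_eq h⟩

end Colorings

end FairColoring

open FairColoring in
theorem stmt_17_general {A : Type*} [Fintype A] (hA : 3 ≤ Fintype.card A)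
    (c : Bool × A × Bool → Bool)
    (hfair : (Finset.univ.filter fun z : Bool × A × Bool => c z = false).card =
             (Finset.univ.filter fun z : Bool × A × Bool => c z = true).card) :
    ∃ σ : Equiv.Perm (Bool × A × Bool), AltDepth σ 4 ∧
      (fun z : Bool × A × Bool => c (σ⁻¹ z)) = (fun z : Bool × A × Bool => z.1) := by
  have hweight : weight (cols (blocks c)) = 2 * Fintype.card A := by
    have := Finset.card_filter_add_card_filter_not (s := Finset.univ) fun z => c z = true
    simp only [Bool.not_eq_true, Finset.card_univ, Fintype.card_prod, Fintype.card_bool] at this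
    rw [weight_cols_blocks]; omega
  obtain ⟨M₁, M₂, M₃, h₁, h₂, h₃, h₄⟩ :=
    exists_block_path _ (by simp [card_cols, blocks]) hweight hA
  obtain ⟨c₁, rfl, r₁⟩ := exists_reachableIn_one_of_cols_eq h₁
  obtain ⟨c₂, rfl, r₂⟩ := exists_reachableIn_one_of_rows_eq h₂
  obtain ⟨c₃, rfl, r₃⟩ := exists_reachableIn_one_of_cols_eq h₃
  have r₄ : ReachableIn 1 c₃ fun z => z.1 :=
    reachableIn_one_of_rows_eq (by simpa [blocks] using h₄.symm)
  exact ((r₁.trans r₂).trans r₃).trans r₄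

theorem stmt_17 {A : Type*} [Fintype A] [DecidableEq A] (hA : 3 ≤ Fintype.card A)
    (c : Bool × A × Bool → Bool)
    (hfair : (Finset.univ.filter fun z : Bool × A × Bool => c z = false).card =
             (Finset.univ.filter fun z : Bool × A × Bool => c z = true).card) :
    ∃ σ : Equiv.Perm (Bool × A × Bool), AltDepth σ 4 ∧
      (fun z : Bool × A × Bool => c (σ⁻¹ z)) = (fun z : Bool × A × Bool => z.1) :=
  stmt_17_general hA c hfair
end

section
/- Every balanced permutation on a finite set X with |X| ≥ 2 commutes with some odd permutation of X. -/
open Equiv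

/-! If no odd permutation commuted with σ, its centralizer would lie in the alternating group.
By `Equiv.Perm.centralizer_le_alternating_iff` this forces the cycle lengths of σ to be pairwise
distinct and σ to fix at most one point (otherwise the permutation exchanging two cycles of equal
length, or a transposition of two fixed points, is odd and commutes with σ). A balanced
permutation with pairwise distinct cycle lengths has no cycles, so σ would be the identity of a
set with at most one point. -/

theorem PermBalanced.cycleType_eq_zero {X : Type*} [Fintype X] [DecidableEq X]
    {σ : Perm X} (hσ : PermBalanced σ) (hcount : ∀ k, σ.cycleType.count k ≤ 1) :
    σ.cycleType = 0 := by
  refine Multiset.eq_zero_of_forall_notMem fun k hk => ?_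
  obtain ⟨r, hr⟩ := hσ k (Perm.two_le_of_mem_cycleType hk)
  have hpos : 1 ≤ σ.cycleType.count k := Multiset.one_le_count_iff_mem.mpr hk
  have hle : σ.cycleType.count k ≤ 1 := hcount k
  omega

theorem stmt_19 {X : Type*} [Fintype X] [DecidableEq X] (hX : 2 ≤ Fintype.card X)
    (σ : Equiv.Perm X) (hσ : PermBalanced σ) :
    ∃ τ : Equiv.Perm X, Equiv.Perm.sign τ = -1 ∧ σ * τ = τ * σ := by
  by_contra! hodd
  have hle : Subgroup.centralizer {σ} ≤ alternatingGroup X := fun τ hτ => by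
    rw [Subgroup.mem_centralizer_singleton_iff] at hτ
    exact (Int.units_eq_one_or _).resolve_right fun hsign => hodd τ hsign hτ.symm
  have hcard := Perm.card_le_of_centralizer_le_alternating hle
  rw [hσ.cycleType_eq_zero (Perm.count_le_one_of_centralizer_le_alternating hle)] at hcard
  simp only [Multiset.sum_zero, zero_add] at hcard
  omega
end
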